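/- BinomialHash achieves minimal disruption: for every n ≥ 1, every ω ≥ 1, every hash sequence h : ℕ → ℕ and every seeded hash H : ℕ → ℕ → ℕ, if lookup(n + 1, h, H) ≠ n then lookup(n, h, H) = lookup(n + 1, h, H). That is, when bucket n is removed from a cluster of n + 1 buckets, only the keys previously mapped to bucket n change bucket. -/

import Mathlib

/-- Relocation within a level: `reloc H b x = b` if `b < 2`, otherwise
`2^d + (H x (2^d − 1)) % 2^d` with `d = Nat.log 2 b`. -/
def reloc (H : ℕ → ℕ → ℕ) (b x : ℕ) : ℕ :=
  if b < 2 then b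
  else 2 ^ Nat.log 2 b + (H x (2 ^ Nat.log 2 b - 1)) % 2 ^ Nat.log 2 b

/-- The main loop of BinomialHash: starting at iteration `i` with `fuel`
remaining iterations, compute `c = reloc(h i % E, h i)`; if `c < M` fall back to
the minor tree, if `c < n` return `c`, otherwise continue; after the last
iteration fall back to the minor tree. -/
def binLoop (H : ℕ → ℕ → ℕ) (n M E : ℕ) (h : ℕ → ℕ) : ℕ → ℕ → ℕ
  | _, 0 => reloc H (h 0 % M) (h 0)
  | i, fuel + 1 =>
      let c := reloc H (h i % E) (h i)
      if c < M then reloc H (h 0 % M) (h 0)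
      else if c < n then c
      else binLoop H n M E h (i + 1) fuel

/-- The BinomialHash lookup with at most `ω` loop iterations: returns `0` when
`n = 1`, and otherwise runs the loop with `E = 2^l`, `M = 2^(l-1)`,
`l = Nat.clog 2 n`. -/
def binomialLookup (ω n : ℕ) (h : ℕ → ℕ) (H : ℕ → ℕ → ℕ) : ℕ :=
  if n = 1 then 0
  else binLoop H n (2 ^ (Nat.clog 2 n - 1)) (2 ^ Nat.clog 2 n) h 0 ω

/-!
If `n` is not a power of two, `⌈log₂ n⌉ = ⌈log₂ (n + 1)⌉`, so both lookups run the same loop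
with the same trees, and the two runs can only part ways at a candidate `c = n`, which the
larger cluster returns. If `n = 2^k`, then for `n + 1` buckets the minor tree is the whole old
tree, and the only valid candidate outside it is `n`; so any other answer is the fallback
`reloc (h 0 % 2^k)`. For `2^k` buckets the first iteration already returns this value, because
relocation keeps a bucket on its level of the tree.
-/

theorem log_reloc (H : ℕ → ℕ → ℕ) (b x : ℕ) : Nat.log 2 (reloc H b x) = Nat.log 2 b := by
  unfold reloc
  split_ifs with hb
  · rfl
  · apply Nat.log_eq_of_pow_le_of_lt_pow (Nat.le_add_right _ _)
    have := Nat.mod_lt (H x (2 ^ Nat.log 2 b - 1)) (Nat.two_pow_pos (Nat.log 2 b))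
    rw [Nat.pow_succ]
    omega

theorem reloc_eq_zero_iff (H : ℕ → ℕ → ℕ) (b x : ℕ) : reloc H b x = 0 ↔ b = 0 := by
  unfold reloc
  split_ifs with hb
  · rfl
  · have := Nat.two_pow_pos (Nat.log 2 b)
    omega

theorem reloc_lt_two_pow_iff (H : ℕ → ℕ → ℕ) (b x m : ℕ) :
    reloc H b x < 2 ^ m ↔ b < 2 ^ m := by
  rcases eq_or_ne b 0 with rfl | hb
  · simp [reloc]
  · have hr : reloc H b x ≠ 0 := (reloc_eq_zero_iff H b x).not.2 hb
    rw [← Nat.log_lt_iff_lt_pow one_lt_two hr, ← Nat.log_lt_iff_lt_pow one_lt_two hb, log_reloc]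

section binLoop

variable (H : ℕ → ℕ → ℕ) (h : ℕ → ℕ)

theorem binLoop_eq_binLoop_succ_of_ne (n M E : ℕ) :
    ∀ fuel i, binLoop H (n + 1) M E h i fuel ≠ n →
      binLoop H n M E h i fuel = binLoop H (n + 1) M E h i fuel
  | 0, _, _ => rfl
  | fuel + 1, i, hne => by
    simp only [binLoop] at hne ⊢
    split_ifs at hne ⊢ <;>
      first | rfl | omega | exact binLoop_eq_binLoop_succ_of_ne n M E fuel _ hne

theorem binLoop_eq_reloc_of_ne (M E : ℕ) :
    ∀ fuel i, binLoop H (M + 1) M E h i fuel ≠ M →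
      binLoop H (M + 1) M E h i fuel = reloc H (h 0 % M) (h 0)
  | 0, _, _ => rfl
  | fuel + 1, i, hne => by
    simp only [binLoop] at hne ⊢
    split_ifs at hne ⊢ <;>
      first | rfl | omega | exact binLoop_eq_reloc_of_ne M E fuel _ hne

theorem binLoop_two_pow (j fuel : ℕ) :
    binLoop H (2 ^ (j + 1)) (2 ^ j) (2 ^ (j + 1)) h 0 (fuel + 1) =
      reloc H (h 0 % 2 ^ (j + 1)) (h 0) := by
  have hb : h 0 % 2 ^ (j + 1) < 2 ^ (j + 1) := Nat.mod_lt _ (Nat.two_pow_pos _)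
  simp only [binLoop]
  split_ifs with hminor hvalid
  · rw [reloc_lt_two_pow_iff] at hminor
    rw [← Nat.mod_mod_of_dvd (h 0) (pow_dvd_pow 2 j.le_succ), Nat.mod_eq_of_lt hminor]
  · rfl
  · exact absurd ((reloc_lt_two_pow_iff H _ _ _).2 hb) hvalid

end binLoop

theorem clog_two_pow_add_one (k : ℕ) : Nat.clog 2 (2 ^ k + 1) = k + 1 :=
  le_antisymm
    ((Nat.clog_le_iff_le_pow one_lt_two).2 <| by
      rw [Nat.pow_succ, Nat.mul_two]
      exact Nat.add_le_add_left Nat.one_le_two_pow _)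
    ((Nat.lt_clog_iff_pow_lt one_lt_two).2 (Nat.lt_add_one _))

section binomialLookup

variable {ω : ℕ} (h : ℕ → ℕ) (H : ℕ → ℕ → ℕ)

theorem binomialLookup_eq_succ_of_clog_eq {n : ℕ} (hn : 2 ≤ n)
    (hclog : Nat.clog 2 (n + 1) = Nat.clog 2 n) (hne : binomialLookup ω (n + 1) h H ≠ n) :
    binomialLookup ω n h H = binomialLookup ω (n + 1) h H := by
  unfold binomialLookup at hne ⊢
  rw [if_neg (by omega), hclog] at hne ⊢
  rw [if_neg (by omega)]
  exact binLoop_eq_binLoop_succ_of_ne H h n _ _ ω 0 hne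

theorem binomialLookup_two_pow (hω : 1 ≤ ω) (k : ℕ) :
    binomialLookup ω (2 ^ k) h H = reloc H (h 0 % 2 ^ k) (h 0) := by
  obtain ⟨fuel, rfl⟩ : ∃ fuel, ω = fuel + 1 := ⟨ω - 1, by omega⟩
  rcases k with _ | j
  · simp only [pow_zero, Nat.mod_one]
    rfl
  · rw [binomialLookup, if_neg (Nat.one_lt_two_pow (by omega)).ne', Nat.clog_pow 2 _ one_lt_two,
      Nat.add_sub_cancel]
    exact binLoop_two_pow H h j fuel

theorem binomialLookup_two_pow_add_one_of_ne (k : ℕ)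
    (hne : binomialLookup ω (2 ^ k + 1) h H ≠ 2 ^ k) :
    binomialLookup ω (2 ^ k + 1) h H = reloc H (h 0 % 2 ^ k) (h 0) := by
  unfold binomialLookup at hne ⊢
  have hk : 2 ^ k + 1 ≠ 1 := by simp
  rw [if_neg hk, clog_two_pow_add_one, Nat.add_sub_cancel] at hne ⊢
  exact binLoop_eq_reloc_of_ne H h _ _ ω 0 hne

end binomialLookup

/-- BinomialHash achieves minimal disruption: when bucket `n` is removed from a
cluster of `n + 1` buckets, only the keys previously mapped to bucket `n`
change bucket. -/
theorem binomialLookup_minimal_disruption (ω n : ℕ) (hω : 1 ≤ ω) (hn : 1 ≤ n)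
    (h : ℕ → ℕ) (H : ℕ → ℕ → ℕ)
    (hne : binomialLookup ω (n + 1) h H ≠ n) :
    binomialLookup ω n h H = binomialLookup ω (n + 1) h H := by
  by_cases hpow : 2 ^ Nat.clog 2 n = n
  · obtain ⟨k, rfl⟩ : ∃ k, n = 2 ^ k := ⟨_, hpow.symm⟩
    rw [binomialLookup_two_pow h H hω, binomialLookup_two_pow_add_one_of_ne h H k hne]
  · have h2n : 2 ≤ n := by
      rcases hn.eq_or_lt with rfl | hlt
      · simp at hpow
      · exact hlt
    exact binomialLookup_eq_succ_of_clog_eq h H h2n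
      ((Nat.clog_eq_clog_succ_iff one_lt_two).2 hpow).symm hne
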